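/- arXiv:1907.05679 — 3 statements merged into one kernel-verified Lean document; each statement's English description precedes it below -/
import Mathlib

section
/- Let V, f₁, f₂ : (-∞,0] → M_n(ℂ) be continuous, bounded, Hermitian-matrix-valued with f₁(x) positive definite and f₂(x) positive semidefinite for all x, let c ∈ M_n(ℂ) be Hermitian, and let φ be an M_n(ℂ)-valued function defined for Re λ ≥ 0 such that for every λ with Re λ ≥ 0 and Im λ ≠ 0, the Hermitian matrix (sign Im λ)·(φ(λ) − φ(λ)*)/(2i) is negative semidefinite. If λ = a + ib with a ≥ 0 is an eigenvalue, i.e. there exists a nonzero H²-solution y on (-∞,0] of y″ + V y = λ f₁ y + λ² f₂ y with (c + φ(λ))y(0) = y′(0), then b = 0, i.e. λ ∈ ℝ. -/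
open MeasureTheory Matrix Set
open scoped ComplexOrder

noncomputable section

/-- Action of a complex `n × n` matrix on `ℂⁿ` with the Euclidean structure. -/
def mact {n : ℕ} (M : Matrix (Fin n) (Fin n) ℂ) (v : EuclideanSpace ℂ (Fin n)) :
    EuclideanSpace ℂ (Fin n) :=
  Matrix.toEuclideanCLM (𝕜 := ℂ) M v

/-- The Hermitian "imaginary part" `Im M = (M - M*) / (2i)` of a matrix. -/
def imPart {n : ℕ} (M : Matrix (Fin n) (Fin n) ℂ) : Matrix (Fin n) (Fin n) ℂ :=
  (2 * Complex.I)⁻¹ • (M - Mᴴ)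

/-!
Put `σ = sign (Im λ)` and `h x = σ · Im ⟪y x, y' x⟫`. As `V`, `f₁`, `f₂` are Hermitian and
`Im λ² = 2 Re λ · Im λ`, the equation gives `h' = |Im λ| · ⟪y, (f₁ + 2 Re λ · f₂) y⟫ ≥ 0`, with
strict inequality wherever `y ≠ 0`. The Robin condition and the sign of `Im φ` give `h 0 ≤ 0`.
Since `|h| ≤ ‖y‖² + ‖y'‖²` is integrable, the nondecreasing `h` cannot be negative anywhere
(it would then stay below a negative constant towards `-∞`), so `h ≡ 0` on `(-∞, 0]`. Hence
`h' ≡ 0`, which forces `y ≡ 0`.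
-/

section QuadraticForm

variable {n : ℕ}

lemma inner_mact_self (M : Matrix (Fin n) (Fin n) ℂ) (v : EuclideanSpace ℂ (Fin n)) :
    inner ℂ v (mact M v) = star (WithLp.ofLp v) ⬝ᵥ M *ᵥ WithLp.ofLp v := by
  rw [EuclideanSpace.inner_eq_star_dotProduct, dotProduct_comm]
  rfl

lemma Matrix.IsHermitian.im_inner_mact_self {M : Matrix (Fin n) (Fin n) ℂ} (hM : M.IsHermitian)
    (v : EuclideanSpace ℂ (Fin n)) : (inner ℂ v (mact M v)).im = 0 := by
  rw [inner_mact_self]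
  exact hM.im_star_dotProduct_mulVec_self _

lemma Matrix.PosSemidef.inner_mact_self_nonneg {M : Matrix (Fin n) (Fin n) ℂ}
    (hM : M.PosSemidef) (v : EuclideanSpace ℂ (Fin n)) : 0 ≤ inner ℂ v (mact M v) := by
  rw [inner_mact_self]
  exact hM.dotProduct_mulVec_nonneg _

lemma Matrix.PosDef.inner_mact_self_pos {M : Matrix (Fin n) (Fin n) ℂ} (hM : M.PosDef)
    {v : EuclideanSpace ℂ (Fin n)} (hv : v ≠ 0) : 0 < inner ℂ v (mact M v) := by
  rw [inner_mact_self]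
  exact hM.dotProduct_mulVec_pos (by simpa using hv)

lemma inner_mact_conjTranspose_self (M : Matrix (Fin n) (Fin n) ℂ)
    (v : EuclideanSpace ℂ (Fin n)) : inner ℂ v (mact Mᴴ v) = star (inner ℂ v (mact M v)) := by
  rw [inner_mact_self, inner_mact_self, star_dotProduct, star_mulVec,
    conjTranspose_conjTranspose, dotProduct_mulVec]

lemma inner_mact_imPart_self (M : Matrix (Fin n) (Fin n) ℂ) (v : EuclideanSpace ℂ (Fin n)) :
    inner ℂ v (mact (imPart M) v) = ((inner ℂ v (mact M v)).im : ℂ) := by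
  have h : inner ℂ v (mact (imPart M) v)
      = (2 * Complex.I)⁻¹ * (inner ℂ v (mact M v) - inner ℂ v (mact Mᴴ v)) := by
    simp only [inner_mact_self, imPart, smul_mulVec, sub_mulVec, dotProduct_smul,
      dotProduct_sub, smul_eq_mul]
  rw [h, inner_mact_conjTranspose_self, Complex.star_def, Complex.sub_conj]
  field_simp
  push_cast
  ring

lemma mul_im_inner_mact_add_nonpos {c P : Matrix (Fin n) (Fin n) ℂ} (hc : c.IsHermitian)
    {σ : ℝ} (hP : (-((σ : ℂ) • imPart P)).PosSemidef) (v : EuclideanSpace ℂ (Fin n)) :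
    σ * (inner ℂ v (mact (c + P) v)).im ≤ 0 := by
  have h := hP.inner_mact_self_nonneg v
  have hneg : mact (-((σ : ℂ) • imPart P)) v = -((σ : ℂ) • mact (imPart P) v) := by
    rw [mact, mact, map_neg, map_smul]
    rfl
  rw [hneg, inner_neg_right, inner_smul_right, inner_mact_imPart_self, ← Complex.ofReal_mul,
    ← Complex.ofReal_neg, Complex.zero_le_real] at h
  have hadd : mact (c + P) v = mact c v + mact P v := by
    rw [mact, map_add]
    rfl
  rw [hadd, inner_add_right, Complex.add_im, hc.im_inner_mact_self, zero_add]
  linarith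

lemma im_inner_eq_of_add_mact_eq {V A B : Matrix (Fin n) (Fin n) ℂ} (hV : V.IsHermitian)
    (hA : A.IsHermitian) (hB : B.IsHermitian) {lam : ℂ} {v w : EuclideanSpace ℂ (Fin n)}
    (h : w + mact V v = lam • mact A v + lam ^ 2 • mact B v) :
    (inner ℂ v w).im = lam.im * (inner ℂ v (mact (A + ((2 * lam.re : ℝ) : ℂ) • B) v)).re := by
  have hlin : mact (A + ((2 * lam.re : ℝ) : ℂ) • B) v
      = mact A v + ((2 * lam.re : ℝ) : ℂ) • mact B v := by
    rw [mact, map_add, map_smul]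
    rfl
  rw [hlin, eq_sub_of_add_eq h, inner_sub_right, inner_add_right, inner_add_right,
    inner_smul_right, inner_smul_right, inner_smul_right]
  simp only [Complex.sub_im, Complex.add_im, Complex.add_re, Complex.mul_im, Complex.mul_re,
    hA.im_inner_mact_self, hB.im_inner_mact_self, hV.im_inner_mact_self, pow_two,
    Complex.ofReal_re, Complex.ofReal_im]
  ring

end QuadraticForm

lemma hasDerivWithinAt_im_inner {E : Type*} [NormedAddCommGroup E]
    [InnerProductSpace ℂ E] [NormedSpace ℝ E] {y y' : ℝ → E} {y'' : E} {s : Set ℝ} {x : ℝ}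
    (hy : HasDerivWithinAt y (y' x) s x) (hy' : HasDerivWithinAt y' y'' s x) :
    HasDerivWithinAt (fun t => (inner ℂ (y t) (y' t)).im) (inner ℂ (y x) y'').im s x := by
  have h := Complex.imCLM.hasFDerivAt.comp_hasDerivWithinAt x (hy.inner ℂ hy')
  have hself : (inner ℂ (y' x) (y' x)).im = 0 := inner_self_im (𝕜 := ℂ) (y' x)
  rw [Complex.imCLM_apply, Complex.add_im, hself, add_zero] at h
  exact h

lemma MeasureTheory.Integrable.inner_of_sq {α 𝕜 E : Type*} [MeasurableSpace α] {μ : Measure α}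
    [RCLike 𝕜] [NormedAddCommGroup E] [InnerProductSpace 𝕜 E] {f g : α → E}
    (hf : AEStronglyMeasurable f μ) (hg : AEStronglyMeasurable g μ)
    (hf2 : Integrable (fun x => ‖f x‖ ^ 2) μ) (hg2 : Integrable (fun x => ‖g x‖ ^ 2) μ) :
    Integrable (fun x => inner 𝕜 (f x) (g x)) μ := by
  refine (hf2.add hg2).mono' (hf.inner hg) (.of_forall fun x => ?_)
  calc ‖inner 𝕜 (f x) (g x)‖ ≤ ‖f x‖ * ‖g x‖ := norm_inner_le_norm _ _
    _ ≤ ‖f x‖ ^ 2 + ‖g x‖ ^ 2 := by nlinarith [sq_nonneg (‖f x‖ - ‖g x‖)]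

lemma MonotoneOn.nonneg_of_integrableOn_Iic {f : ℝ → ℝ} {a : ℝ} (hf : MonotoneOn f (Iic a))
    (hint : IntegrableOn f (Iic a)) {x : ℝ} (hx : x ≤ a) : 0 ≤ f x := by
  by_contra! hneg
  have hconst : IntegrableOn (fun _ => -f x) (Iic x) := by
    refine (hint.mono_set (Iic_subset_Iic.mpr hx)).norm.mono' aestronglyMeasurable_const ?_
    refine (ae_restrict_iff' measurableSet_Iic).mpr (.of_forall fun t ht => ?_)
    have hft : f t ≤ f x := hf (ht.trans hx) hx ht
    rw [norm_neg, Real.norm_of_nonpos hneg.le, Real.norm_of_nonpos (hft.trans hneg.le)]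
    linarith
  rw [integrableOn_const_iff, Real.volume_Iic] at hconst
  simp [hneg.ne] at hconst

lemma eq_zero_of_hasDerivWithinAt_nonneg_of_integrableOn_Iic {f f' : ℝ → ℝ} {a : ℝ}
    (hf : ∀ x ∈ Iic a, HasDerivWithinAt f (f' x) (Iic a) x) (hf' : ∀ x ∈ Iic a, 0 ≤ f' x)
    (hint : IntegrableOn f (Iic a)) (ha : f a ≤ 0) {x : ℝ} (hx : x ∈ Iic a) : f' x = 0 := by
  have hmono : MonotoneOn f (Iic a) :=
    monotoneOn_of_hasDerivWithinAt_nonneg (convex_Iic a)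
      (fun x hx => (hf x hx).continuousWithinAt)
      (fun x hx => (hf x (interior_subset hx)).mono interior_subset)
      (fun x hx => hf' x (interior_subset hx))
  have hzero : EqOn f 0 (Iic a) := fun t ht =>
    le_antisymm ((hmono ht self_mem_Iic ht).trans ha) (hmono.nonneg_of_integrableOn_Iic hint ht)
  exact (uniqueDiffOn_Iic a x hx).eq_deriv _ (hf x hx)
    ((hasDerivWithinAt_const x _ 0).congr hzero (hzero hx))

theorem halfline_robin_unstable_eigenvalues_real_general {n : ℕ}
    (V f₁ f₂ : ℝ → Matrix (Fin n) (Fin n) ℂ)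
    (hVherm : ∀ x ∈ Iic (0 : ℝ), (V x).IsHermitian)
    (hf₁pos : ∀ x ∈ Iic (0 : ℝ), (f₁ x).PosDef)
    (hf₂pos : ∀ x ∈ Iic (0 : ℝ), (f₂ x).PosSemidef)
    (c : Matrix (Fin n) (Fin n) ℂ) (hc : c.IsHermitian)
    (φ : ℂ → Matrix (Fin n) (Fin n) ℂ)
    (hφ : ∀ lam : ℂ, 0 ≤ lam.re → lam.im ≠ 0 →
      (-((Real.sign lam.im : ℂ) • imPart (φ lam))).PosSemidef)
    (lam : ℂ) (hlam : 0 ≤ lam.re)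
    (y y' y'' : ℝ → EuclideanSpace ℂ (Fin n))
    (hyne : ∃ x ∈ Iic (0 : ℝ), y x ≠ 0)
    (hy1 : ∀ x ∈ Iic (0 : ℝ), HasDerivWithinAt y (y' x) (Iic 0) x)
    (hy2 : ∀ x ∈ Iic (0 : ℝ), HasDerivWithinAt y' (y'' x) (Iic 0) x)
    (hyL2 : Integrable (fun x => ‖y x‖ ^ 2) (volume.restrict (Iic 0)))
    (hy'L2 : Integrable (fun x => ‖y' x‖ ^ 2) (volume.restrict (Iic 0)))
    (heqn : ∀ x ∈ Iic (0 : ℝ), y'' x + mact (V x) (y x)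
        = lam • mact (f₁ x) (y x) + lam ^ 2 • mact (f₂ x) (y x))
    (hbc : mact (c + φ lam) (y 0) = y' 0) :
    lam.im = 0 := by
  by_contra him
  set σ := Real.sign lam.im
  set K : ℝ → Matrix (Fin n) (Fin n) ℂ := fun x => f₁ x + ((2 * lam.re : ℝ) : ℂ) • f₂ x
  have hσ : 0 < σ * lam.im := Real.sign_mul_pos_of_ne_zero _ him
  have hK : ∀ x ∈ Iic (0 : ℝ), (K x).PosDef := fun x hx =>
    (hf₁pos x hx).add_posSemidef ((hf₂pos x hx).smul (Complex.zero_le_real.mpr (by positivity)))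
  have hderiv : ∀ x ∈ Iic (0 : ℝ), HasDerivWithinAt (fun t => σ * (inner ℂ (y t) (y' t)).im)
      (σ * lam.im * (inner ℂ (y x) (mact (K x) (y x))).re) (Iic 0) x := fun x hx => by
    have h := (hasDerivWithinAt_im_inner (hy1 x hx) (hy2 x hx)).const_mul σ
    rwa [im_inner_eq_of_add_mact_eq (hVherm x hx) (hf₁pos x hx).isHermitian
      (hf₂pos x hx).isHermitian (heqn x hx), ← mul_assoc] at h
  have hderiv_nonneg : ∀ x ∈ Iic (0 : ℝ), 0 ≤ σ * lam.im * (inner ℂ (y x) (mact (K x) (y x))).re :=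
    fun x hx => mul_nonneg hσ.le
      (Complex.nonneg_iff.mp ((hK x hx).posSemidef.inner_mact_self_nonneg _)).1
  have hycont : ContinuousOn y (Iic 0) := fun x hx => (hy1 x hx).continuousWithinAt
  have hy'cont : ContinuousOn y' (Iic 0) := fun x hx => (hy2 x hx).continuousWithinAt
  have hint : IntegrableOn (fun t => σ * (inner ℂ (y t) (y' t)).im) (Iic 0) :=
    ((Integrable.inner_of_sq (𝕜 := ℂ) (hycont.aestronglyMeasurable measurableSet_Iic)
      (hy'cont.aestronglyMeasurable measurableSet_Iic) hyL2 hy'L2).im).const_mul σ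
  have hbdry : σ * (inner ℂ (y 0) (y' 0)).im ≤ 0 := by
    rw [← hbc]
    exact mul_im_inner_mact_add_nonpos hc (hφ lam hlam him) _
  obtain ⟨x, hx, hyx⟩ := hyne
  refine (mul_pos hσ (Complex.pos_iff.mp ((hK x hx).inner_mact_self_pos hyx)).1).ne' ?_
  exact eq_zero_of_hasDerivWithinAt_nonneg_of_integrableOn_Iic hderiv hderiv_nonneg hint hbdry hx

/-- under the sign condition on `Im φ`, eigenvalues of the half-line Robin
problem with nonnegative real part are real. -/
theorem halfline_robin_unstable_eigenvalues_real {n : ℕ} (hn : 1 ≤ n)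
    (V f₁ f₂ : ℝ → Matrix (Fin n) (Fin n) ℂ)
    (hVcont : ContinuousOn V (Iic 0))
    (hf₁cont : ContinuousOn f₁ (Iic 0))
    (hf₂cont : ContinuousOn f₂ (Iic 0))
    (hbdd : ∃ C : ℝ, ∀ x ∈ Iic (0 : ℝ),
      ‖Matrix.toEuclideanCLM (𝕜 := ℂ) (V x)‖ ≤ C ∧
      ‖Matrix.toEuclideanCLM (𝕜 := ℂ) (f₁ x)‖ ≤ C ∧
      ‖Matrix.toEuclideanCLM (𝕜 := ℂ) (f₂ x)‖ ≤ C)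
    (hVherm : ∀ x ∈ Iic (0 : ℝ), (V x).IsHermitian)
    (hf₁herm : ∀ x ∈ Iic (0 : ℝ), (f₁ x).IsHermitian)
    (hf₂herm : ∀ x ∈ Iic (0 : ℝ), (f₂ x).IsHermitian)
    (hf₁pos : ∀ x ∈ Iic (0 : ℝ), (f₁ x).PosDef)
    (hf₂pos : ∀ x ∈ Iic (0 : ℝ), (f₂ x).PosSemidef)
    (c : Matrix (Fin n) (Fin n) ℂ) (hc : c.IsHermitian)
    (φ : ℂ → Matrix (Fin n) (Fin n) ℂ)
    (hφ : ∀ lam : ℂ, 0 ≤ lam.re → lam.im ≠ 0 →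
      (-((Real.sign lam.im : ℂ) • imPart (φ lam))).PosSemidef)
    (lam : ℂ) (hlam : 0 ≤ lam.re)
    (y y' y'' : ℝ → EuclideanSpace ℂ (Fin n))
    (hyne : ∃ x ∈ Iic (0 : ℝ), y x ≠ 0)
    (hy1 : ∀ x ∈ Iic (0 : ℝ), HasDerivWithinAt y (y' x) (Iic 0) x)
    (hy2 : ∀ x ∈ Iic (0 : ℝ), HasDerivWithinAt y' (y'' x) (Iic 0) x)
    (hycont : ContinuousOn y'' (Iic 0))
    (hyL2 : Integrable (fun x => ‖y x‖ ^ 2) (volume.restrict (Iic 0)))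
    (hy'L2 : Integrable (fun x => ‖y' x‖ ^ 2) (volume.restrict (Iic 0)))
    (hy''L2 : Integrable (fun x => ‖y'' x‖ ^ 2) (volume.restrict (Iic 0)))
    (heqn : ∀ x ∈ Iic (0 : ℝ), y'' x + mact (V x) (y x)
        = lam • mact (f₁ x) (y x) + lam ^ 2 • mact (f₂ x) (y x))
    (hbc : mact (c + φ lam) (y 0) = y' 0) :
    lam.im = 0 :=
  halfline_robin_unstable_eigenvalues_real_general V f₁ f₂ hVherm hf₁pos hf₂pos c hc φ hφ lam hlam y
    y' y'' hyne hy1 hy2 hyL2 hy'L2 heqn hbc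
end
end

section
/- Let V, f₁, f₂ : ℝ → M_n(ℂ) be continuous, bounded, Hermitian-matrix-valued functions such that f₁(x) is positive definite for every x and f₂(x) − δ·I is positive semidefinite for every x, for some fixed δ > 0. Let L ∈ ℝ and let λ ∈ ℝ be such that there exists a nonzero H²-solution y on (-∞, L] of y″(x) + V(x)y(x) = λ f₁(x)y(x) + λ² f₂(x)y(x) with Dirichlet boundary condition y(L) = 0. Then λ ≤ √(‖f₂‖_{L∞(ℝ)} · ‖V‖_{L∞(ℝ)})/δ; in particular this upper bound is independent of L. -/
/-!
Pair the equation with `y` and integrate over `(-∞, L]`. Integrating by parts, `∫ ⟪y, y''⟫`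
becomes `-∫ ‖y'‖² ≤ 0`: the boundary term `⟪y, y'⟫` vanishes at `L` by the Dirichlet condition
and at `-∞` because it and its derivative are integrable. For `λ > 0`, positivity of `f₁` and of
`f₂ - δ` gives `λ² δ ‖y‖² ≤ ⟪y, y''⟫ + ⟪y, V y⟫` pointwise, hence `λ² δ ≤ sup ‖V‖`. Testing
`f₂ - δ ≥ 0` on a nonzero vector gives `δ ≤ sup ‖f₂‖`, so `(λ δ)² ≤ sup ‖f₂‖ · sup ‖V‖`.
-/

open MeasureTheory Matrix Set
open scoped ComplexOrder

noncomputable section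

open Filter Topology
open scoped InnerProductSpace

section HalfLine

variable {E : Type*} [NormedAddCommGroup E] [InnerProductSpace ℝ E]

theorem integrable_inner_of_integrable_norm_sq {α : Type*} [MeasurableSpace α] {μ : Measure α}
    {f g : α → E} (hf : AEStronglyMeasurable f μ) (hg : AEStronglyMeasurable g μ)
    (hf2 : Integrable (fun x => ‖f x‖ ^ 2) μ) (hg2 : Integrable (fun x => ‖g x‖ ^ 2) μ) :
    Integrable (fun x => ⟪f x, g x⟫_ℝ) μ := by
  refine (hf2.add hg2).mono' (hf.inner hg) (ae_of_all _ fun x => ?_)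
  change |⟪f x, g x⟫_ℝ| ≤ ‖f x‖ ^ 2 + ‖g x‖ ^ 2
  nlinarith [abs_real_inner_le_norm (f x) (g x), sq_nonneg (‖f x‖ - ‖g x‖)]

theorem integral_Iic_inner_eq_neg_integral_norm_sq {y y' y'' : ℝ → E} {L : ℝ}
    (hy : ∀ x ∈ Iic L, HasDerivWithinAt y (y' x) (Iic L) x)
    (hy' : ∀ x ∈ Iic L, HasDerivWithinAt y' (y'' x) (Iic L) x)
    (hy''c : ContinuousOn y'' (Iic L))
    (hyI : IntegrableOn (fun x => ‖y x‖ ^ 2) (Iic L))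
    (hy'I : IntegrableOn (fun x => ‖y' x‖ ^ 2) (Iic L))
    (hy''I : IntegrableOn (fun x => ‖y'' x‖ ^ 2) (Iic L)) (hyL : y L = 0) :
    ∫ x in Iic L, ⟪y x, y'' x⟫_ℝ = -∫ x in Iic L, ‖y' x‖ ^ 2 := by
  have hym := (HasDerivWithinAt.continuousOn hy).aestronglyMeasurable (μ := volume)
    measurableSet_Iic
  have hy'm := (HasDerivWithinAt.continuousOn hy').aestronglyMeasurable (μ := volume)
    measurableSet_Iic
  have hy''m := hy''c.aestronglyMeasurable (μ := volume) measurableSet_Iic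
  set G := fun x => ⟪y x, y' x⟫_ℝ
  have hGint : IntegrableOn G (Iic L) := integrable_inner_of_integrable_norm_sq hym hy'm hyI hy'I
  have hyy''int : IntegrableOn (fun x => ⟪y x, y'' x⟫_ℝ) (Iic L) :=
    integrable_inner_of_integrable_norm_sq hym hy''m hyI hy''I
  have hG'int := hyy''int.add hy'I
  have hG' : ∀ x ∈ Iic L, HasDerivWithinAt G (⟪y x, y'' x⟫_ℝ + ‖y' x‖ ^ 2) (Iic L) x := by
    intro x hx
    simpa only [real_inner_self_eq_norm_sq] using (hy x hx).inner ℝ (hy' x hx)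
  have hderiv : ∀ x ∈ Iio L, HasDerivAt G (⟪y x, y'' x⟫_ℝ + ‖y' x‖ ^ 2) x := fun x hx =>
    (hG' x (mem_Iic.2 hx.out.le)).hasDerivAt (Iic_mem_nhds hx)
  have hG_tendsto : Tendsto G atBot (𝓝 0) :=
    tendsto_zero_of_hasDerivAt_of_integrableOn_Iic (a := L - 1)
      (fun x hx => hderiv x (by simp only [mem_Iic, mem_Iio] at hx ⊢; linarith))
      (hG'int.mono_set (Iic_subset_Iic.2 (by linarith)))
      (hGint.mono_set (Iic_subset_Iic.2 (by linarith)))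
  have hFTC := integral_Iic_of_hasDerivAt_of_tendsto (hG' L self_mem_Iic).continuousWithinAt
    hderiv hG'int hG_tendsto
  rw [integral_add hyy''int hy'I] at hFTC
  simp only [G, hyL, inner_zero_left, sub_zero] at hFTC
  linarith

end HalfLine

theorem setIntegral_Iic_pos_of_continuousOn {f : ℝ → ℝ} {L c : ℝ} (hf : ContinuousOn f (Iic L))
    (hfi : IntegrableOn f (Iic L)) (hf0 : ∀ x ∈ Iic L, 0 ≤ f x) (hcL : c ≤ L) (hfc : 0 < f c) :
    0 < ∫ x in Iic L, f x := by
  have hpos : 0 < ∫ x in (c - 1)..L, f x :=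
    intervalIntegral.integral_pos (by linarith) (hf.mono Icc_subset_Iic_self)
      (fun x hx => hf0 x hx.2) ⟨c, ⟨by linarith, hcL⟩, hfc⟩
  rw [intervalIntegral.integral_of_le (by linarith)] at hpos
  exact hpos.trans_le (setIntegral_mono_set hfi
    ((ae_restrict_iff' measurableSet_Iic).2 (ae_of_all _ hf0)) Ioc_subset_Iic_self.eventuallyLE)

theorem le_sqrt_mul_div_of_sq_mul_le {lam δ a b : ℝ} (hδ : 0 < δ) (hδa : δ ≤ a)
    (h : lam ^ 2 * δ ≤ b) : lam ≤ √(a * b) / δ := by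
  rw [le_div_iff₀ hδ]
  have hb : 0 ≤ b := (by positivity : 0 ≤ lam ^ 2 * δ).trans h
  refine (le_abs_self _).trans (Real.abs_le_sqrt ?_)
  calc (lam * δ) ^ 2 = lam ^ 2 * δ * δ := by ring
    _ ≤ b * a := mul_le_mul h hδa hδ.le hb
    _ = a * b := mul_comm b a

theorem EuclideanSpace.real_inner_eq_re_inner {ι : Type*} [Fintype ι] (u v : EuclideanSpace ℂ ι) :
    ⟪u, v⟫_ℝ = RCLike.re ⟪u, v⟫_ℂ := by
  simp [PiLp.inner_apply, Complex.inner]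

namespace Matrix

variable {n : ℕ} {M : Matrix (Fin n) (Fin n) ℂ}

theorem PosSemidef.inner_mact_self_nonneg_s7 (hM : M.PosSemidef) (v : EuclideanSpace ℂ (Fin n)) :
    0 ≤ ⟪v, mact M v⟫_ℝ := by
  rw [EuclideanSpace.real_inner_eq_re_inner]
  exact (isPositive_toEuclideanLin_iff.2 hM).re_inner_nonneg_right v

theorem mact_sub_smul_one (δ : ℂ) (v : EuclideanSpace ℂ (Fin n)) :
    mact (M - δ • 1) v = mact M v - δ • v := by
  simp [mact]

theorem mul_norm_sq_le_inner_mact_self {δ : ℝ} (hM : (M - (δ : ℂ) • 1).PosSemidef)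
    (v : EuclideanSpace ℂ (Fin n)) : δ * ‖v‖ ^ 2 ≤ ⟪v, mact M v⟫_ℝ := by
  have h := hM.inner_mact_self_nonneg_s7 v
  rw [mact_sub_smul_one, inner_sub_right, Complex.coe_smul, real_inner_smul_right,
    real_inner_self_eq_norm_sq] at h
  linarith

theorem inner_mact_self_le (M : Matrix (Fin n) (Fin n) ℂ) (v : EuclideanSpace ℂ (Fin n)) :
    ⟪v, mact M v⟫_ℝ ≤ ‖toEuclideanCLM (𝕜 := ℂ) M‖ * ‖v‖ ^ 2 :=
  calc ⟪v, mact M v⟫_ℝ ≤ ‖v‖ * ‖mact M v‖ := real_inner_le_norm _ _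
    _ ≤ ‖v‖ * (‖toEuclideanCLM (𝕜 := ℂ) M‖ * ‖v‖) := by
      gcongr; exact (toEuclideanCLM (𝕜 := ℂ) M).le_opNorm v
    _ = ‖toEuclideanCLM (𝕜 := ℂ) M‖ * ‖v‖ ^ 2 := by ring

theorem le_norm_toEuclideanCLM_of_posSemidef_sub {δ : ℝ} (hM : (M - (δ : ℂ) • 1).PosSemidef)
    {v : EuclideanSpace ℂ (Fin n)} (hv : v ≠ 0) : δ ≤ ‖toEuclideanCLM (𝕜 := ℂ) M‖ :=
  le_of_mul_le_mul_right ((mul_norm_sq_le_inner_mact_self hM v).trans (inner_mact_self_le M v))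
    (by positivity)

theorem sq_mul_mul_norm_sq_le_inner_add_of_eq {V f₁ f₂ : Matrix (Fin n) (Fin n) ℂ} {δ lam c : ℝ}
    (hlam : 0 ≤ lam) (hf₁ : f₁.PosSemidef) (hf₂ : (f₂ - (δ : ℂ) • 1).PosSemidef)
    (hV : ‖toEuclideanCLM (𝕜 := ℂ) V‖ ≤ c) {v w : EuclideanSpace ℂ (Fin n)}
    (h : w + mact V v = (lam : ℂ) • mact f₁ v + (lam : ℂ) ^ 2 • mact f₂ v) :
    lam ^ 2 * δ * ‖v‖ ^ 2 ≤ ⟪v, w⟫_ℝ + c * ‖v‖ ^ 2 := by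
  have hpair := congrArg (⟪v, ·⟫_ℝ) h
  simp only [inner_add_right, ← Complex.ofReal_pow, Complex.coe_smul, real_inner_smul_right]
    at hpair
  have hf₁v := hf₁.inner_mact_self_nonneg_s7 v
  have hf₂v := mul_norm_sq_le_inner_mact_self hf₂ v
  have hVv := (inner_mact_self_le V v).trans (mul_le_mul_of_nonneg_right hV (sq_nonneg ‖v‖))
  nlinarith [mul_le_mul_of_nonneg_left hf₂v (sq_nonneg lam), mul_nonneg hlam hf₁v]

theorem sq_mul_le_of_dirichlet_eigenfunction {V f₁ f₂ : ℝ → Matrix (Fin n) (Fin n) ℂ}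
    {δ lam c L x₀ : ℝ} (hlam : 0 ≤ lam) (hf₁ : ∀ x, (f₁ x).PosSemidef)
    (hf₂ : ∀ x, (f₂ x - (δ : ℂ) • 1).PosSemidef) (hV : ∀ x, ‖toEuclideanCLM (𝕜 := ℂ) (V x)‖ ≤ c)
    {y y' y'' : ℝ → EuclideanSpace ℂ (Fin n)} (hx₀L : x₀ ∈ Iic L) (hx₀ : y x₀ ≠ 0)
    (hy : ∀ x ∈ Iic L, HasDerivWithinAt y (y' x) (Iic L) x)
    (hy' : ∀ x ∈ Iic L, HasDerivWithinAt y' (y'' x) (Iic L) x)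
    (hy''c : ContinuousOn y'' (Iic L))
    (hyI : IntegrableOn (fun x => ‖y x‖ ^ 2) (Iic L))
    (hy'I : IntegrableOn (fun x => ‖y' x‖ ^ 2) (Iic L))
    (hy''I : IntegrableOn (fun x => ‖y'' x‖ ^ 2) (Iic L))
    (hode : ∀ x ∈ Iic L, y'' x + mact (V x) (y x)
      = (lam : ℂ) • mact (f₁ x) (y x) + (lam : ℂ) ^ 2 • mact (f₂ x) (y x))
    (hyL : y L = 0) :
    lam ^ 2 * δ ≤ c := by
  have hN : 0 < ∫ x in Iic L, ‖y x‖ ^ 2 :=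
    setIntegral_Iic_pos_of_continuousOn ((HasDerivWithinAt.continuousOn hy).norm.pow 2) hyI
      (fun _ _ => sq_nonneg _) hx₀L (by positivity)
  have hkinetic : 0 ≤ ∫ x in Iic L, ‖y' x‖ ^ 2 :=
    setIntegral_nonneg measurableSet_Iic fun _ _ => sq_nonneg _
  have hyy''int : IntegrableOn (fun x => ⟪y x, y'' x⟫_ℝ) (Iic L) :=
    integrable_inner_of_integrable_norm_sq
      ((HasDerivWithinAt.continuousOn hy).aestronglyMeasurable measurableSet_Iic)
      (hy''c.aestronglyMeasurable measurableSet_Iic) hyI hy''I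
  have henergy : ∫ x in Iic L, lam ^ 2 * δ * ‖y x‖ ^ 2
      ≤ ∫ x in Iic L, (⟪y x, y'' x⟫_ℝ + c * ‖y x‖ ^ 2) :=
    setIntegral_mono_on (hyI.const_mul (lam ^ 2 * δ)) (hyy''int.add (hyI.const_mul c))
      measurableSet_Iic fun x hx =>
        sq_mul_mul_norm_sq_le_inner_add_of_eq hlam (hf₁ x) (hf₂ x) (hV x) (hode x hx)
  rw [integral_add hyy''int (hyI.const_mul c), integral_const_mul, integral_const_mul,
    integral_Iic_inner_eq_neg_integral_norm_sq hy hy' hy''c hyI hy'I hy''I hyL] at henergy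
  exact le_of_mul_le_mul_right (by linarith) hN

end Matrix

theorem truncated_dirichlet_real_eigenvalue_upper_bound_general {n : ℕ}
    (V f₁ f₂ : ℝ → Matrix (Fin n) (Fin n) ℂ) (δ : ℝ) (hδ : 0 < δ)
    (hbdd : ∃ C : ℝ, ∀ x : ℝ,
      ‖Matrix.toEuclideanCLM (𝕜 := ℂ) (V x)‖ ≤ C ∧
      ‖Matrix.toEuclideanCLM (𝕜 := ℂ) (f₁ x)‖ ≤ C ∧
      ‖Matrix.toEuclideanCLM (𝕜 := ℂ) (f₂ x)‖ ≤ C)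
    (hf₁pos : ∀ x : ℝ, (f₁ x).PosDef)
    (hf₂pos : ∀ x : ℝ, (f₂ x - (δ : ℂ) • (1 : Matrix (Fin n) (Fin n) ℂ)).PosSemidef)
    (L : ℝ) (lam : ℝ)
    (hev : ∃ y y' y'' : ℝ → EuclideanSpace ℂ (Fin n),
      (∃ x ∈ Iic L, y x ≠ 0) ∧
      (∀ x ∈ Iic L, HasDerivWithinAt y (y' x) (Iic L) x) ∧
      (∀ x ∈ Iic L, HasDerivWithinAt y' (y'' x) (Iic L) x) ∧
      ContinuousOn y'' (Iic L) ∧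
      Integrable (fun x => ‖y x‖ ^ 2) (volume.restrict (Iic L)) ∧
      Integrable (fun x => ‖y' x‖ ^ 2) (volume.restrict (Iic L)) ∧
      Integrable (fun x => ‖y'' x‖ ^ 2) (volume.restrict (Iic L)) ∧
      (∀ x ∈ Iic L, y'' x + mact (V x) (y x)
          = (lam : ℂ) • mact (f₁ x) (y x) + (lam : ℂ) ^ 2 • mact (f₂ x) (y x)) ∧
      y L = 0) :
    lam ≤ Real.sqrt
        ((⨆ x : ℝ, ‖Matrix.toEuclideanCLM (𝕜 := ℂ) (f₂ x)‖) *
          (⨆ x : ℝ, ‖Matrix.toEuclideanCLM (𝕜 := ℂ) (V x)‖)) / δ := by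
  obtain ⟨C, hC⟩ := hbdd
  obtain ⟨y, y', y'', ⟨x₀, hx₀L, hx₀⟩, hy, hy', hy''c, hyI, hy'I, hy''I, hode, hyL⟩ := hev
  rcases le_or_gt lam 0 with hlam | hlam
  · exact hlam.trans (div_nonneg (Real.sqrt_nonneg _) hδ.le)
  have hVbdd : BddAbove (range fun x => ‖Matrix.toEuclideanCLM (𝕜 := ℂ) (V x)‖) :=
    ⟨C, by rintro _ ⟨x, rfl⟩; exact (hC x).1⟩
  have hf₂bdd : BddAbove (range fun x => ‖Matrix.toEuclideanCLM (𝕜 := ℂ) (f₂ x)‖) :=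
    ⟨C, by rintro _ ⟨x, rfl⟩; exact (hC x).2.2⟩
  have hδf₂ := (le_norm_toEuclideanCLM_of_posSemidef_sub (hf₂pos x₀) hx₀).trans
    (le_ciSup hf₂bdd x₀)
  exact le_sqrt_mul_div_of_sq_mul_le hδ hδf₂ <|
    sq_mul_le_of_dirichlet_eigenfunction hlam.le (fun x => (hf₁pos x).posSemidef) hf₂pos
      (le_ciSup hVbdd) hx₀L hx₀ hy hy' hy''c hyI hy'I hy''I hode hyL

/-- every real eigenvalue of the truncated Dirichlet problem on `(-∞, L]`
satisfies `λ ≤ √(‖f₂‖_{L∞(ℝ)} ‖V‖_{L∞(ℝ)}) / δ`, a bound independent of `L`. -/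
theorem truncated_dirichlet_real_eigenvalue_upper_bound {n : ℕ} (hn : 1 ≤ n)
    (V f₁ f₂ : ℝ → Matrix (Fin n) (Fin n) ℂ) (δ : ℝ) (hδ : 0 < δ)
    (hVcont : Continuous V)
    (hf₁cont : Continuous f₁)
    (hf₂cont : Continuous f₂)
    (hbdd : ∃ C : ℝ, ∀ x : ℝ,
      ‖Matrix.toEuclideanCLM (𝕜 := ℂ) (V x)‖ ≤ C ∧
      ‖Matrix.toEuclideanCLM (𝕜 := ℂ) (f₁ x)‖ ≤ C ∧
      ‖Matrix.toEuclideanCLM (𝕜 := ℂ) (f₂ x)‖ ≤ C)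
    (hVherm : ∀ x : ℝ, (V x).IsHermitian)
    (hf₁herm : ∀ x : ℝ, (f₁ x).IsHermitian)
    (hf₂herm : ∀ x : ℝ, (f₂ x).IsHermitian)
    (hf₁pos : ∀ x : ℝ, (f₁ x).PosDef)
    (hf₂pos : ∀ x : ℝ, (f₂ x - (δ : ℂ) • (1 : Matrix (Fin n) (Fin n) ℂ)).PosSemidef)
    (L : ℝ) (lam : ℝ)
    (hev : ∃ y y' y'' : ℝ → EuclideanSpace ℂ (Fin n),
      (∃ x ∈ Iic L, y x ≠ 0) ∧
      (∀ x ∈ Iic L, HasDerivWithinAt y (y' x) (Iic L) x) ∧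
      (∀ x ∈ Iic L, HasDerivWithinAt y' (y'' x) (Iic L) x) ∧
      ContinuousOn y'' (Iic L) ∧
      Integrable (fun x => ‖y x‖ ^ 2) (volume.restrict (Iic L)) ∧
      Integrable (fun x => ‖y' x‖ ^ 2) (volume.restrict (Iic L)) ∧
      Integrable (fun x => ‖y'' x‖ ^ 2) (volume.restrict (Iic L)) ∧
      (∀ x ∈ Iic L, y'' x + mact (V x) (y x)
          = (lam : ℂ) • mact (f₁ x) (y x) + (lam : ℂ) ^ 2 • mact (f₂ x) (y x)) ∧
      y L = 0) :
    lam ≤ Real.sqrt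
        ((⨆ x : ℝ, ‖Matrix.toEuclideanCLM (𝕜 := ℂ) (f₂ x)‖) *
          (⨆ x : ℝ, ‖Matrix.toEuclideanCLM (𝕜 := ℂ) (V x)‖)) / δ :=
  truncated_dirichlet_real_eigenvalue_upper_bound_general V f₁ f₂ δ hδ hbdd hf₁pos hf₂pos L lam hev
end
end

section
/- Let 0 < p ≤ 1 and let A : ℝ → M_n(ℝ) be such that A(t) is symmetric positive definite for every t, A is differentiable at t₀ with derivative A′(t₀) symmetric positive definite. If the map t ↦ A(t)^p is differentiable at t₀ with derivative S, then S is positive definite. -/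
open Matrix

noncomputable section

/-- The real power `A^p` of a symmetric matrix, defined by the spectral functional
calculus: diagonalize and apply `t ↦ t ^ p` to the eigenvalues. -/
def herPow {n : ℕ} (A : Matrix (Fin n) (Fin n) ℝ) (hA : A.IsHermitian) (p : ℝ) :
    Matrix (Fin n) (Fin n) ℝ :=
  hA.eigenvectorUnitary.1 *
    Matrix.diagonal (fun i => hA.eigenvalues i ^ p) *
    (star hA.eigenvectorUnitary : Matrix (Fin n) (Fin n) ℝ)

/-!
Since `A′(t₀) > 0`, for `t` slightly larger than `t₀` we have `A(t) ≥ A(t₀) + κ (t - t₀)` for some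
`κ > 0`. Operator monotonicity of `x ↦ x ^ p` (Löwner–Heinz) then gives
`A(t) ^ p ≥ (A(t₀) + κ (t - t₀)) ^ p`, whose quadratic form at `v` is
`∑ i, (λ i + κ (t - t₀)) ^ p * w i ^ 2`, where `λ` are the eigenvalues of `A(t₀)` and `w` the
coordinates of `v` in an orthonormal eigenbasis. Both sides agree at `t₀`, so comparing right
derivatives gives `⟪S v, v⟫ ≥ κ p ∑ i, λ i ^ (p - 1) * w i ^ 2 > 0`.
-/

open Filter Topology Set
open scoped MatrixOrder ComplexOrder

lemma cfc_add_algebraMap {A : Type*} [Ring A] [StarRing A] [TopologicalSpace A] [Algebra ℝ A]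
    [ContinuousFunctionalCalculus ℝ A IsSelfAdjoint] [T2Space A] {f : ℝ → ℝ} (hf : Continuous f)
    (a : A) (c : ℝ) (ha : IsSelfAdjoint a := by cfc_tac) :
    cfc f (a + algebraMap ℝ A c) = cfc (fun x => f (x + c)) a := by
  rw [cfc_comp' f (· + c) a, cfc_add_const c (fun x => x) a, cfc_id' ℝ a]

lemma le_of_hasDerivAt_of_eventuallyLE {f g : ℝ → ℝ} {f' g' a : ℝ} (hf : HasDerivAt f f' a)
    (hg : HasDerivAt g g' a) (ha : f a = g a) (hfg : f ≤ᶠ[𝓝[>] a] g) : f' ≤ g' := by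
  have hslope {h : ℝ → ℝ} {h'} (hh : HasDerivAt h h' a) : Tendsto (slope h a) (𝓝[>] a) (𝓝 h') :=
    (hasDerivAt_iff_tendsto_slope.1 hh).mono_left (nhdsWithin_mono _ fun _ ht => ne_of_gt ht)
  refine le_of_tendsto_of_tendsto (hslope hf) (hslope hg) ?_
  filter_upwards [hfg, self_mem_nhdsWithin] with t hle (ht : a < t)
  rw [slope_def_field, slope_def_field, ha]
  gcongr

lemma hasDerivAt_sum_rpow_add_mul {ι : Type*} [Fintype ι] {μ : ι → ℝ} (hμ : ∀ i, 0 < μ i)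
    (w : ι → ℝ) (p κ t₀ : ℝ) :
    HasDerivAt (fun t => ∑ i, (μ i + κ * (t - t₀)) ^ p * w i)
      (∑ i, κ * p * μ i ^ (p - 1) * w i) t₀ := by
  refine HasDerivAt.fun_sum fun i _ => ?_
  have hlin : HasDerivAt (fun t => μ i + κ * (t - t₀)) κ t₀ := by
    simpa using (((hasDerivAt_id t₀).sub_const t₀).const_mul κ).const_add (μ i)
  simpa using (hlin.rpow_const (Or.inl (by simpa using (hμ i).ne'))).mul_const (w i)

namespace Matrix

lemma isHermitian_of_hasDerivAt {n : Type*} {F : ℝ → Matrix n n ℝ} {S : Matrix n n ℝ} {t₀ : ℝ}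
    (hF : ∀ t, (F t).IsHermitian) (hS : ∀ i j, HasDerivAt (fun t => F t i j) (S i j) t₀) :
    S.IsHermitian := by
  ext i j
  refine (hS j i).unique ?_
  have hswap : (fun t => F t i j) = fun t => F t j i :=
    funext fun t => by simpa using (hF t).apply j i
  exact hswap ▸ hS i j

variable {n : Type*} [Fintype n]

def ofRealStarAlgHom [DecidableEq n] : Matrix n n ℝ →⋆ₐ[ℝ] Matrix n n ℂ where
  toFun M := M.map (↑)
  map_one' := Matrix.map_one _ Complex.ofReal_zero Complex.ofReal_one
  map_mul' _ _ := Matrix.map_mul (f := Complex.ofRealHom)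
  map_zero' := Matrix.map_zero _ Complex.ofReal_zero
  map_add' := Matrix.map_add _ Complex.ofReal_add
  commutes' r := Matrix.map_algebraMap r _ Complex.ofReal_zero rfl
  map_star' _ := Matrix.conjTranspose_map _ fun _ => (Complex.conj_ofReal _).symm

@[simp]
lemma ofRealStarAlgHom_apply [DecidableEq n] (M : Matrix n n ℝ) :
    ofRealStarAlgHom M = M.map ((↑) : ℝ → ℂ) := rfl

@[fun_prop]
lemma continuous_ofRealStarAlgHom [DecidableEq n] :
    Continuous (ofRealStarAlgHom : Matrix n n ℝ → Matrix n n ℂ) :=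
  continuous_id.matrix_map Complex.continuous_ofReal

lemma posSemidef_map_ofReal_iff [DecidableEq n] {M : Matrix n n ℝ} :
    (M.map ((↑) : ℝ → ℂ)).PosSemidef ↔ M.PosSemidef := by
  constructor
  · intro h
    refine .of_dotProduct_mulVec_nonneg (IsHermitian.ext fun i j => by simpa using h.1.apply i j)
      fun x => ?_
    have hx := h.dotProduct_mulVec_nonneg (Complex.ofReal ∘ x)
    have hcast : star (Complex.ofReal ∘ x) ⬝ᵥ (M.map Complex.ofReal *ᵥ (Complex.ofReal ∘ x)) =
        ((star x ⬝ᵥ (M *ᵥ x) : ℝ) : ℂ) := by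
      simp [dotProduct, mulVec]
    rw [hcast] at hx
    exact_mod_cast hx
  · intro h
    rw [← ofRealStarAlgHom_apply, h.1.spectral_theorem, Unitary.conjStarAlgAut_apply, map_mul,
      map_mul, map_star]
    refine PosSemidef.mul_mul_conjTranspose_same ?_ _
    simp only [ofRealStarAlgHom_apply, diagonal_map Complex.ofReal_zero]
    exact .diagonal fun i => by simpa using h.eigenvalues_nonneg i

lemma ofRealStarAlgHom_le_iff [DecidableEq n] {M N : Matrix n n ℝ} :
    ofRealStarAlgHom M ≤ ofRealStarAlgHom N ↔ M ≤ N := by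
  rw [le_iff, le_iff, ← map_sub, ofRealStarAlgHom_apply, posSemidef_map_ofReal_iff]

open scoped Matrix.Norms.L2Operator in
/-- Löwner–Heinz for real matrices, transported from the complex C⋆-algebra `Matrix n n ℂ`. -/
lemma cfc_rpow_le_cfc_rpow [DecidableEq n] {p : ℝ} (hp : p ∈ Icc 0 1) {X Y : Matrix n n ℝ}
    (hX : 0 ≤ X) (hXY : X ≤ Y) : cfc (fun x : ℝ => x ^ p) X ≤ cfc (fun x : ℝ => x ^ p) Y := by
  have hY : 0 ≤ Y := hX.trans hXY
  have hφX : 0 ≤ ofRealStarAlgHom X := by simpa using ofRealStarAlgHom_le_iff.2 hX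
  have hφY : 0 ≤ ofRealStarAlgHom Y := by simpa using ofRealStarAlgHom_le_iff.2 hY
  rw [← ofRealStarAlgHom_le_iff, StarAlgHom.map_cfc ofRealStarAlgHom _ X,
    StarAlgHom.map_cfc ofRealStarAlgHom _ Y, ← CFC.rpow_eq_cfc_real hφX,
    ← CFC.rpow_eq_cfc_real hφY]
  exact CFC.rpow_le_rpow hp (ofRealStarAlgHom_le_iff.2 hXY)

lemma abs_dotProduct_mulVec_le (E : Matrix n n ℝ) (u : n → ℝ) :
    |u ⬝ᵥ (E *ᵥ u)| ≤ (∑ i, ∑ j, |E i j|) * (u ⬝ᵥ u) := by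
  have hcoord (i : n) : u i ^ 2 ≤ u ⬝ᵥ u := by
    simpa [dotProduct, sq] using
      Finset.single_le_sum (fun k _ => mul_self_nonneg (u k)) (Finset.mem_univ i)
  have hprod (i j : n) : |u i * u j| ≤ u ⬝ᵥ u := by
    rw [abs_mul]
    nlinarith [hcoord i, hcoord j, sq_abs (u i), sq_abs (u j), sq_nonneg (|u i| - |u j|)]
  calc |u ⬝ᵥ (E *ᵥ u)| = |∑ i, ∑ j, E i j * (u i * u j)| := by
        simp only [dotProduct, mulVec, Finset.mul_sum]
        congr 1
        exact Finset.sum_congr rfl fun i _ => Finset.sum_congr rfl fun j _ => by ring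
    _ ≤ ∑ i, ∑ j, |E i j| * (u ⬝ᵥ u) := by
        refine (Finset.abs_sum_le_sum_abs _ _).trans (Finset.sum_le_sum fun i _ => ?_)
        refine (Finset.abs_sum_le_sum_abs _ _).trans (Finset.sum_le_sum fun j _ => ?_)
        rw [abs_mul]
        exact mul_le_mul_of_nonneg_left (hprod i j) (abs_nonneg _)
    _ = (∑ i, ∑ j, |E i j|) * (u ⬝ᵥ u) := by simp only [Finset.sum_mul]

lemma dotProduct_mulVec_le_of_le {M N : Matrix n n ℝ} (h : M ≤ N) (v : n → ℝ) :
    v ⬝ᵥ (M *ᵥ v) ≤ v ⬝ᵥ (N *ᵥ v) := by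
  have := (le_iff.1 h).dotProduct_mulVec_nonneg v
  rw [star_trivial, sub_mulVec, dotProduct_sub] at this
  linarith

lemma hasDerivAt_dotProduct_mulVec {F : ℝ → Matrix n n ℝ} {S : Matrix n n ℝ} {t₀ : ℝ}
    (hF : ∀ i j, HasDerivAt (fun t => F t i j) (S i j) t₀) (v : n → ℝ) :
    HasDerivAt (fun t => v ⬝ᵥ (F t *ᵥ v)) (v ⬝ᵥ (S *ᵥ v)) t₀ := by
  simp only [dotProduct, mulVec]
  exact HasDerivAt.fun_sum fun i _ =>
    (HasDerivAt.fun_sum fun j _ => (hF i j).mul_const (v j)).const_mul (v i)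

variable [DecidableEq n]

lemma algebraMap_le_iff_dotProduct_mulVec {M : Matrix n n ℝ} (hM : M.IsHermitian) (r : ℝ) :
    algebraMap ℝ (Matrix n n ℝ) r ≤ M ↔ ∀ u, r * (u ⬝ᵥ u) ≤ u ⬝ᵥ (M *ᵥ u) := by
  rw [Algebra.algebraMap_eq_smul_one, le_iff, posSemidef_iff_dotProduct_mulVec,
    and_iff_right (hM.sub (isHermitian_one.smul (IsSelfAdjoint.all r)))]
  simp [sub_mulVec, smul_mulVec]

lemma PosDef.exists_pos_mul_dotProduct_self_le {M : Matrix n n ℝ} (hM : M.PosDef) :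
    ∃ r > 0, ∀ u, r * (u ⬝ᵥ u) ≤ u ⬝ᵥ (M *ᵥ u) := by
  cases isEmpty_or_nonempty n
  · exact ⟨1, one_pos, fun u => by simp [dotProduct]⟩
  obtain ⟨r, hr, hrM⟩ := (CFC.exists_pos_algebraMap_le_iff hM.1.isSelfAdjoint).2
    fun x hx => (isStrictlyPositive_iff_posDef.2 hM).spectrum_pos hx
  exact ⟨r, hr, (algebraMap_le_iff_dotProduct_mulVec hM.1 r).1 hrM⟩

lemma eventually_algebraMap_le_of_tendsto {α : Type*} {l : Filter α} {D : α → Matrix n n ℝ}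
    {M : Matrix n n ℝ} (hD : Tendsto D l (𝓝 M)) (hsym : ∀ᶠ x in l, (D x).IsHermitian)
    {r κ : ℝ} (hM : ∀ u, r * (u ⬝ᵥ u) ≤ u ⬝ᵥ (M *ᵥ u)) (hκ : κ < r) :
    ∀ᶠ x in l, algebraMap ℝ (Matrix n n ℝ) κ ≤ D x := by
  have hcont : Continuous fun N : Matrix n n ℝ => ∑ i, ∑ j, |(N - M) i j| := by fun_prop
  have hsmall : ∀ᶠ x in l, ∑ i, ∑ j, |(D x - M) i j| < r - κ := by
    have : Tendsto (fun x => ∑ i, ∑ j, |(D x - M) i j|) l (𝓝 0) := by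
      simpa [Function.comp_def] using (hcont.tendsto M).comp hD
    exact this.eventually (gt_mem_nhds (sub_pos.2 hκ))
  filter_upwards [hsym, hsmall] with x hx hxM
  rw [algebraMap_le_iff_dotProduct_mulVec hx]
  intro u
  have hdev := (abs_le.1 (abs_dotProduct_mulVec_le (D x - M) u)).1
  rw [sub_mulVec, dotProduct_sub] at hdev
  have huu : 0 ≤ u ⬝ᵥ u := dotProduct_self_star_nonneg u
  nlinarith [hM u]

lemma eventually_add_algebraMap_le_of_hasDerivAt {A : ℝ → Matrix n n ℝ}
    (hsym : ∀ t, (A t).IsHermitian) {t₀ : ℝ} {A' : Matrix n n ℝ}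
    (hA : ∀ i j, HasDerivAt (fun t => A t i j) (A' i j) t₀) {r κ : ℝ}
    (hA' : ∀ u, r * (u ⬝ᵥ u) ≤ u ⬝ᵥ (A' *ᵥ u)) (hκ : κ < r) :
    ∀ᶠ t in 𝓝[>] t₀, A t₀ + algebraMap ℝ (Matrix n n ℝ) (κ * (t - t₀)) ≤ A t := by
  have hslope : Tendsto (slope A t₀) (𝓝[>] t₀) (𝓝 A') :=
    tendsto_pi_nhds.2 fun i => tendsto_pi_nhds.2 fun j =>
      (hasDerivAt_iff_tendsto_slope.1 (hA i j)).mono_left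
        (nhdsWithin_mono _ fun _ ht => ne_of_gt ht)
  have hsym_slope (t : ℝ) : (slope A t₀ t).IsHermitian := by
    rw [slope_def_module]
    exact ((hsym t).sub (hsym t₀)).smul (IsSelfAdjoint.all _)
  filter_upwards [eventually_algebraMap_le_of_tendsto hslope (.of_forall hsym_slope) hA' hκ,
    self_mem_nhdsWithin] with t hle (ht : t₀ < t)
  rw [← le_sub_iff_add_le', algebraMap_le_iff_dotProduct_mulVec ((hsym t).sub (hsym t₀))]
  rw [algebraMap_le_iff_dotProduct_mulVec (hsym_slope t)] at hle
  intro u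
  have := hle u
  rw [slope_def_module, smul_mulVec, dotProduct_smul, smul_eq_mul,
    le_inv_mul_iff₀ (sub_pos.2 ht)] at this
  linarith

lemma IsHermitian.dotProduct_cfc_mulVec {X : Matrix n n ℝ} (hX : X.IsHermitian) (f : ℝ → ℝ)
    (v : n → ℝ) :
    v ⬝ᵥ (cfc f X *ᵥ v) = ∑ i, f (hX.eigenvalues i) *
      ((star (hX.eigenvectorUnitary : Matrix n n ℝ) *ᵥ v) i) ^ 2 := by
  rw [hX.cfc_eq, IsHermitian.cfc, Unitary.conjStarAlgAut_apply, ← mulVec_mulVec, ← mulVec_mulVec,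
    dotProduct_mulVec, ← mulVec_transpose, star_eq_conjTranspose,
    conjTranspose_eq_transpose_of_trivial]
  simp [dotProduct, mulVec_diagonal, sq, mul_left_comm]

lemma PosSemidef.sum_eigenvalues_add_rpow_mul_le {X Y : Matrix n n ℝ} (hX : X.PosSemidef)
    {p : ℝ} (hp : p ∈ Icc 0 1) {c : ℝ} (hc : 0 ≤ c)
    (hXY : X + algebraMap ℝ (Matrix n n ℝ) c ≤ Y) (v : n → ℝ) :
    ∑ i, (hX.1.eigenvalues i + c) ^ p * ((star (hX.1.eigenvectorUnitary : Matrix n n ℝ) *ᵥ v) i) ^ 2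
      ≤ v ⬝ᵥ (cfc (fun x : ℝ => x ^ p) Y *ᵥ v) := by
  have hX0 : 0 ≤ X + algebraMap ℝ (Matrix n n ℝ) c := add_nonneg hX.nonneg (algebraMap_nonneg _ hc)
  rw [← hX.1.dotProduct_cfc_mulVec (fun x => (x + c) ^ p),
    ← cfc_add_algebraMap (Real.continuous_rpow_const hp.1) _ _ hX.1]
  exact dotProduct_mulVec_le_of_le (cfc_rpow_le_cfc_rpow hp hX0 hXY) v

lemma star_mulVec_ne_zero_of_mem_unitary {U : Matrix n n ℝ} (hU : U ∈ unitary (Matrix n n ℝ))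
    {v : n → ℝ} (hv : v ≠ 0) : star U *ᵥ v ≠ 0 := by
  intro h
  apply hv
  rw [← one_mulVec v, ← Unitary.mul_star_self_of_mem hU, ← mulVec_mulVec, h, mulVec_zero]

end Matrix

lemma herPow_eq_cfc {n : ℕ} {A : Matrix (Fin n) (Fin n) ℝ} (hA : A.IsHermitian) (p : ℝ) :
    herPow A hA p = cfc (fun x : ℝ => x ^ p) A := by
  rw [hA.cfc_eq, IsHermitian.cfc, Unitary.conjStarAlgAut_apply, herPow]
  rfl

theorem deriv_of_matrix_rpow_posDef_general {n : ℕ}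
    (p : ℝ) (hp0 : 0 < p) (hp1 : p ≤ 1)
    (A : ℝ → Matrix (Fin n) (Fin n) ℝ)
    (hA : ∀ t : ℝ, (A t).PosDef)
    (t₀ : ℝ) (A' : Matrix (Fin n) (Fin n) ℝ)
    (hAdiff : ∀ i j : Fin n, HasDerivAt (fun t => A t i j) (A' i j) t₀)
    (hA'pos : A'.PosDef)
    (S : Matrix (Fin n) (Fin n) ℝ)
    (hSdiff : ∀ i j : Fin n,
      HasDerivAt (fun t => herPow (A t) (hA t).1 p i j) (S i j) t₀) :
    S.PosDef := by
  have hS : S.IsHermitian := isHermitian_of_hasDerivAt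
    (fun t => by rw [herPow_eq_cfc]; exact cfc_predicate _ _) hSdiff
  refine .of_dotProduct_mulVec_pos hS fun v hv => ?_
  rw [star_trivial]
  obtain ⟨r, hr, hA'r⟩ := hA'pos.exists_pos_mul_dotProduct_self_le
  have hB := (hA t₀).posSemidef
  set μ := hB.1.eigenvalues
  set w := star (hB.1.eigenvectorUnitary : Matrix (Fin n) (Fin n) ℝ) *ᵥ v
  have hφ := hasDerivAt_sum_rpow_add_mul (hA t₀).eigenvalues_pos (w · ^ 2) p (r / 2) t₀
  have heq : ∑ i, (μ i + r / 2 * (t₀ - t₀)) ^ p * w i ^ 2 =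
      v ⬝ᵥ (herPow (A t₀) (hA t₀).1 p *ᵥ v) := by
    simp [herPow_eq_cfc, hB.1.dotProduct_cfc_mulVec, μ, w]
  have hle : (fun t => ∑ i, (μ i + r / 2 * (t - t₀)) ^ p * w i ^ 2) ≤ᶠ[𝓝[>] t₀]
      fun t => v ⬝ᵥ (herPow (A t) (hA t).1 p *ᵥ v) := by
    filter_upwards [eventually_add_algebraMap_le_of_hasDerivAt (fun t => (hA t).1) hAdiff hA'r
      (half_lt_self hr), self_mem_nhdsWithin] with t hAt (ht : t₀ < t)
    rw [herPow_eq_cfc]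
    exact hB.sum_eigenvalues_add_rpow_mul_le ⟨hp0.le, hp1⟩
      (mul_nonneg (half_pos hr).le (sub_nonneg.2 ht.le)) hAt v
  obtain ⟨i, hi⟩ :=
    Function.ne_iff.1 (star_mulVec_ne_zero_of_mem_unitary hB.1.eigenvectorUnitary.2 hv)
  have hμ := (hA t₀).eigenvalues_pos
  calc 0 < ∑ i, r / 2 * p * μ i ^ (p - 1) * w i ^ 2 :=
        Finset.sum_pos' (fun j _ => by have := hμ j; positivity)
          ⟨i, Finset.mem_univ i, by have := hμ i; have : w i ≠ 0 := hi; positivity⟩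
    _ ≤ v ⬝ᵥ (S *ᵥ v) :=
        le_of_hasDerivAt_of_eventuallyLE hφ (hasDerivAt_dotProduct_mulVec hSdiff v) heq hle

/-- if `t ↦ A(t)^p` (with `0 < p ≤ 1`) is differentiable at `t₀` with
derivative `S`, and `A` is a family of symmetric positive definite matrices which is
differentiable at `t₀` with symmetric positive definite derivative `A′(t₀)`, then `S`
is positive definite. -/
theorem deriv_of_matrix_rpow_posDef {n : ℕ}
    (p : ℝ) (hp0 : 0 < p) (hp1 : p ≤ 1)
    (A : ℝ → Matrix (Fin n) (Fin n) ℝ)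
    (hA : ∀ t : ℝ, (A t).PosDef)
    (t₀ : ℝ) (A' : Matrix (Fin n) (Fin n) ℝ)
    (hAdiff : ∀ i j : Fin n, HasDerivAt (fun t => A t i j) (A' i j) t₀)
    (hA'sym : A'.IsHermitian) (hA'pos : A'.PosDef)
    (S : Matrix (Fin n) (Fin n) ℝ)
    (hSdiff : ∀ i j : Fin n,
      HasDerivAt (fun t => herPow (A t) (hA t).1 p i j) (S i j) t₀) :
    S.PosDef :=
  deriv_of_matrix_rpow_posDef_general p hp0 hp1 A hA t₀ A' hAdiff hA'pos S hSdiff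
end
end
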